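/- The function λ(x) = log(1 − (2/x)·Ψ(x)) / log Ψ(x), where Ψ(x) = I₁(x)/I₀(x), satisfies lim_{x→0⁺} λ(x) = 2. -/

import Mathlib

/-!
Write `I_n(x) = (x/2)^n S_n((x/2)^2)` with the entire series `S_n(y) = ∑ y^m / (m! (m+n)!)`.
The recurrence `I_0 - (2/x) I_1 = I_2`, i.e. `S_0 - S_1 = y S_2`, turns the numerator of `λ`
into `1 - (2/x) Ψ = Ψ² · S_0 S_2 / S_1²`. So `log (1 - (2/x) Ψ) = 2 log Ψ + O(1)`, the bounded
term tending to `log (S_0(0) S_2(0) / S_1(0)²) = log (1/2)`, while `log Ψ → -∞` as `Ψ(x) ~ x/2`.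
-/

open Real Filter Topology

/-- The modified Bessel function of the first kind of real order `ν`. -/
noncomputable def besselI (ν x : ℝ) : ℝ :=
  ∑' m : ℕ, (x / 2) ^ (2 * (m : ℝ) + ν) / ((m.factorial : ℝ) * Real.Gamma ((m : ℝ) + ν + 1))

/-- `Ψ_ν(x) = I_{ν+1}(x) / I_ν(x)`. -/
noncomputable def psi (ν x : ℝ) : ℝ := besselI (ν + 1) x / besselI ν x

lemma tendsto_div_of_tendsto_sub_mul {α : Type*} {l : Filter α} {f s : α → ℝ} {k C : ℝ}
    (hs : Tendsto s l atBot) (hf : Tendsto (fun x => f x - k * s x) l (𝓝 C)) :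
    Tendsto (fun x => f x / s x) l (𝓝 k) := by
  have h := tendsto_const_nhds (x := k) |>.add (hf.mul (tendsto_inv_atBot_zero.comp hs))
  rw [mul_zero, add_zero] at h
  refine h.congr' ?_
  filter_upwards [hs.eventually_ne_atBot 0] with x hx
  simp only [Function.comp_apply]
  field_simp
  ring

open scoped Nat

noncomputable def besselSeries (n : ℕ) (y : ℝ) : ℝ := ∑' m : ℕ, y ^ m / (m ! * (m + n)!)

lemma norm_besselSeries_term_le (n m : ℕ) (y : ℝ) :
    ‖y ^ m / (m ! * (m + n)! : ℝ)‖ ≤ |y| ^ m / m ! := by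
  rw [Real.norm_eq_abs, abs_div, abs_pow, abs_of_pos (by positivity : (0 : ℝ) < m ! * (m + n)!)]
  gcongr
  exact le_mul_of_one_le_right (by positivity) (mod_cast (m + n).factorial_pos)

lemma summable_besselSeries_term (n : ℕ) (y : ℝ) :
    Summable fun m : ℕ => y ^ m / (m ! * (m + n)! : ℝ) :=
  .of_norm_bounded (Real.summable_pow_div_factorial |y|) (norm_besselSeries_term_le n · y)

lemma besselSeries_pos (n : ℕ) {y : ℝ} (hy : 0 ≤ y) : 0 < besselSeries n y :=
  (summable_besselSeries_term n y).tsum_pos (fun m => by positivity) 0 (by simp; positivity)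

lemma besselSeries_zero (n : ℕ) : besselSeries n 0 = 1 / n ! := by
  rw [besselSeries, tsum_eq_single 0 (fun m hm => by simp [hm])]
  simp

lemma continuous_besselSeries (n : ℕ) : Continuous (besselSeries n) := by
  refine continuous_iff_continuousAt.2 fun y₀ => ?_
  refine tendsto_tsum_of_dominated_convergence (bound := fun m => (|y₀| + 1) ^ m / m !)
    (Real.summable_pow_div_factorial _) (fun m => ((continuous_pow m).div_const _).tendsto y₀) ?_
  filter_upwards [Metric.ball_mem_nhds y₀ one_pos] with y hy m
  refine (norm_besselSeries_term_le n m y).trans ?_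
  gcongr
  have := abs_sub_abs_le_abs_sub y y₀
  rw [Metric.mem_ball, Real.dist_eq] at hy
  linarith

lemma besselSeries_sub_mul_succ (n : ℕ) (y : ℝ) :
    besselSeries n y - (n + 1) * besselSeries (n + 1) y = y * besselSeries (n + 2) y := by
  have hs := summable_besselSeries_term
  rw [besselSeries, besselSeries, besselSeries, ← tsum_mul_left, ← tsum_mul_left,
    ← (hs n y).tsum_sub ((hs (n + 1) y).mul_left _),
    ((hs n y).sub ((hs (n + 1) y).mul_left _)).tsum_eq_zero_add]
  have hconst : 1 / (n ! : ℝ) - (n + 1) * (1 / ((n + 1)! : ℝ)) = 0 := by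
    rw [Nat.factorial_succ]; push_cast; field_simp; ring
  simp only [pow_zero, Nat.factorial_zero, Nat.cast_one, one_mul, zero_add, hconst]
  congr 1; funext m
  rw [show m + 1 + (n + 1) = m + n + 2 by omega, show m + (n + 2) = m + n + 2 by omega,
    show m + 1 + n = m + n + 1 by omega, Nat.factorial_succ m, Nat.factorial_succ (m + n + 1)]
  push_cast
  field_simp
  ring

lemma besselI_natCast (n : ℕ) (x : ℝ) :
    besselI n x = (x / 2) ^ n * besselSeries n ((x / 2) ^ 2) := by
  rw [besselI, besselSeries, ← tsum_mul_left]
  congr 1; funext m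
  rw [show (2 * (m : ℝ) + n) = ((2 * m + n : ℕ) : ℝ) by push_cast; ring, Real.rpow_natCast,
    show ((m : ℝ) + n + 1) = ((m + n : ℕ) : ℝ) + 1 by push_cast; ring, Real.Gamma_nat_eq_factorial,
    pow_add, pow_mul]
  ring

lemma psi_zero_eq (x : ℝ) :
    psi 0 x = x / 2 * (besselSeries 1 ((x / 2) ^ 2) / besselSeries 0 ((x / 2) ^ 2)) := by
  have h0 := besselI_natCast 0 x
  have h1 := besselI_natCast 1 x
  push_cast at h0 h1
  rw [psi, zero_add, h0, h1, pow_zero, pow_one, one_mul, mul_div_assoc]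

lemma psi_zero_pos {x : ℝ} (hx : 0 < x) : 0 < psi 0 x := by
  rw [psi_zero_eq]
  exact mul_pos (half_pos hx)
    (div_pos (besselSeries_pos 1 (sq_nonneg _)) (besselSeries_pos 0 (sq_nonneg _)))

lemma one_sub_two_div_mul_psi_zero {x : ℝ} (hx : x ≠ 0) :
    1 - 2 / x * psi 0 x = psi 0 x ^ 2 * (besselSeries 0 ((x / 2) ^ 2) *
      besselSeries 2 ((x / 2) ^ 2) / besselSeries 1 ((x / 2) ^ 2) ^ 2) := by
  have h0 := (besselSeries_pos 0 (sq_nonneg (x / 2))).ne'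
  have h1 := (besselSeries_pos 1 (sq_nonneg (x / 2))).ne'
  have hrec := besselSeries_sub_mul_succ 0 ((x / 2) ^ 2)
  rw [psi_zero_eq]
  generalize besselSeries 0 ((x / 2) ^ 2) = s₀ at *
  generalize besselSeries 1 ((x / 2) ^ 2) = s₁ at *
  generalize besselSeries 2 ((x / 2) ^ 2) = s₂ at *
  field_simp
  push_cast at hrec
  linear_combination 4 * hrec

lemma continuous_besselSeries_half_sq (n : ℕ) :
    Continuous fun x : ℝ => besselSeries n ((x / 2) ^ 2) :=
  (continuous_besselSeries n).comp (by fun_prop)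

lemma tendsto_psi_zero_nhdsGT : Tendsto (psi 0) (𝓝[>] 0) (𝓝[>] 0) := by
  refine tendsto_nhdsWithin_iff.2 ⟨?_, eventually_mem_nhdsWithin.mono fun x hx => psi_zero_pos hx⟩
  have hcont : Continuous (psi 0) := by
    rw [funext psi_zero_eq]
    exact (continuous_id.div_const 2).mul ((continuous_besselSeries_half_sq 1).div
      (continuous_besselSeries_half_sq 0) fun x => (besselSeries_pos 0 (sq_nonneg _)).ne')
  simpa [psi_zero_eq] using (hcont.tendsto 0).mono_left nhdsWithin_le_nhds

lemma tendsto_besselSeries_turan_ratio :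
    Tendsto (fun x : ℝ => besselSeries 0 ((x / 2) ^ 2) * besselSeries 2 ((x / 2) ^ 2) /
      besselSeries 1 ((x / 2) ^ 2) ^ 2) (𝓝 0) (𝓝 (1 / 2)) := by
  have hcont : Continuous fun x : ℝ => besselSeries 0 ((x / 2) ^ 2) *
      besselSeries 2 ((x / 2) ^ 2) / besselSeries 1 ((x / 2) ^ 2) ^ 2 :=
    ((continuous_besselSeries_half_sq 0).mul (continuous_besselSeries_half_sq 2)).div
      ((continuous_besselSeries_half_sq 1).pow 2)
      fun x => pow_ne_zero 2 (besselSeries_pos 1 (sq_nonneg _)).ne'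
  simpa [besselSeries_zero] using hcont.tendsto 0

theorem stmt_7 :
    Filter.Tendsto (fun x : ℝ => Real.log (1 - (2 / x) * psi 0 x) / Real.log (psi 0 x))
      (nhdsWithin 0 (Set.Ioi 0)) (nhds 2) := by
  have hlog_ratio := (tendsto_besselSeries_turan_ratio.mono_left
    (nhdsWithin_le_nhds (s := Set.Ioi 0))).log (by norm_num : (1 / 2 : ℝ) ≠ 0)
  refine tendsto_div_of_tendsto_sub_mul
    (tendsto_log_nhdsGT_zero.comp tendsto_psi_zero_nhdsGT) (hlog_ratio.congr' ?_)
  filter_upwards [self_mem_nhdsWithin] with x (hx : 0 < x)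
  have h₀ := besselSeries_pos 0 (sq_nonneg (x / 2))
  have h₁ := besselSeries_pos 1 (sq_nonneg (x / 2))
  have h₂ := besselSeries_pos 2 (sq_nonneg (x / 2))
  rw [one_sub_two_div_mul_psi_zero hx.ne',
    log_mul (pow_pos (psi_zero_pos hx) 2).ne' (by positivity), log_pow]
  push_cast
  ring
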